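/- Let Π be a forward-propagating DatalogMTL program. Then for every interpretation 𝔍 and every time point t ∈ ℚ, the immediate consequence operator commutes with projection to the past: T_Π(𝔍)|_{(−∞,t]} = T_Π(𝔍|_{(−∞,t]})|_{(−∞,t]}. -/
import Mathlib


namespace DatalogMTL

/-- An interval: a nonempty convex subset of the rational timeline. -/
structure Intvl where
  carrier : Set ℚ
  nonempty : carrier.Nonempty
  convex : ∀ ⦃a b c : ℚ⦄, a ∈ carrier → c ∈ carrier → a ≤ b → b ≤ c → b ∈ carrier

/-- An interval containing only non-negative rationals. -/
def Intvl.Nonneg (ρ : Intvl) : Prop := ∀ t ∈ ρ.carrier, (0 : ℚ) ≤ t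

/-- Intervals indexing metric operators: only non-negative rationals. -/
abbrev NNIntvl := {ρ : Intvl // ρ.Nonneg}

/-- Terms: variables or constants (both named by naturals). -/
inductive Term where
  | var (v : ℕ)
  | const (c : ℕ)

/-- A (possibly non-ground) relational atom. -/
structure Atom where
  pred : ℕ
  args : List Term

/-- A ground relational atom. -/
structure GAtom where
  pred : ℕ
  args : List ℕ

/-- Applying a substitution (assignment of constants to variables) to a term. -/
def Term.subst (σ : ℕ → ℕ) : Term → ℕ
  | Term.var v => σ v
  | Term.const c => c

/-- Applying a substitution to a relational atom, producing a ground atom. -/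
def Atom.subst (σ : ℕ → ℕ) (A : Atom) : GAtom := ⟨A.pred, A.args.map (Term.subst σ)⟩

/-- Metric atoms over atoms of type `α`. -/
inductive MA (α : Type) where
  | top : MA α
  | bot : MA α
  | atom (A : α) : MA α
  | diaMinus (ρ : NNIntvl) (M : MA α) : MA α
  | diaPlus (ρ : NNIntvl) (M : MA α) : MA α
  | boxMinus (ρ : NNIntvl) (M : MA α) : MA α
  | boxPlus (ρ : NNIntvl) (M : MA α) : MA α
  | since (ρ : NNIntvl) (M₁ M₂ : MA α) : MA α
  | untl (ρ : NNIntvl) (M₁ M₂ : MA α) : MA α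

def MA.map {α β : Type} (g : α → β) : MA α → MA β
  | .top => .top
  | .bot => .bot
  | .atom A => .atom (g A)
  | .diaMinus ρ M => .diaMinus ρ (M.map g)
  | .diaPlus ρ M => .diaPlus ρ (M.map g)
  | .boxMinus ρ M => .boxMinus ρ (M.map g)
  | .boxPlus ρ M => .boxPlus ρ (M.map g)
  | .since ρ M₁ M₂ => .since ρ (M₁.map g) (M₂.map g)
  | .untl ρ M₁ M₂ => .untl ρ (M₁.map g) (M₂.map g)

/-- Grounding a metric atom by a substitution. -/
def MA.subst (M : MA Atom) (σ : ℕ → ℕ) : MA GAtom := M.map (Atom.subst σ)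

/-- An interpretation: for each ground relational atom and rational time point,
whether the atom holds there. -/
def Interp : Type := GAtom → ℚ → Prop

/-- Containment of interpretations. -/
def leI (I J : Interp) : Prop := ∀ A t, I A t → J A t

/-- Satisfaction of ground metric atoms at a time point. -/
def sat (I : Interp) : ℚ → MA GAtom → Prop
  | _, .top => True
  | _, .bot => False
  | t, .atom A => I A t
  | t, .diaMinus ρ M => ∃ t', (t - t') ∈ ρ.1.carrier ∧ sat I t' M
  | t, .diaPlus ρ M => ∃ t', (t' - t) ∈ ρ.1.carrier ∧ sat I t' M
  | t, .boxMinus ρ M => ∀ t', (t - t') ∈ ρ.1.carrier → sat I t' M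
  | t, .boxPlus ρ M => ∀ t', (t' - t) ∈ ρ.1.carrier → sat I t' M
  | t, .since ρ M₁ M₂ =>
      ∃ t', (t - t') ∈ ρ.1.carrier ∧ sat I t' M₂ ∧ ∀ t'', t' < t'' → t'' < t → sat I t'' M₁
  | t, .untl ρ M₁ M₂ =>
      ∃ t', (t' - t) ∈ ρ.1.carrier ∧ sat I t' M₂ ∧ ∀ t'', t < t'' → t'' < t' → sat I t'' M₁

/-- Satisfaction of a ground metric atom throughout a set of time points. -/
def satSet (I : Interp) (M : MA GAtom) (s : Set ℚ) : Prop := ∀ t ∈ s, sat I t M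

/-- Satisfaction of a ground metric atom throughout an interval. -/
def satIvl (I : Interp) (M : MA GAtom) (ρ : Intvl) : Prop := satSet I M ρ.carrier

/-- A fact `M@ρ`. -/
structure Fact where
  atom : GAtom
  ivl : Intvl

/-- The least model of a set of facts. -/
def interpOf (F : Set Fact) : Interp := fun A t => ∃ f ∈ F, f.atom = A ∧ t ∈ f.ivl.carrier

/-- A dataset: a finite set of facts. -/
structure Dataset where
  facts : Set Fact
  finite : facts.Finite

/-- The least model `𝔍_D` of a dataset `D`. -/
def Dataset.interp (D : Dataset) : Interp := interpOf D.facts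

/-- An interpretation satisfies a fact if the atom holds throughout the interval. -/
def satFact (I : Interp) (f : Fact) : Prop := satIvl I (MA.atom f.atom) f.ivl

/-- The head grammar `M' ::= ⊤ | P(s) | ■⁻ρ M' | ■⁺ρ M'`. -/
inductive HeadOK {α : Type} : MA α → Prop where
  | top : HeadOK MA.top
  | atom (A : α) : HeadOK (MA.atom A)
  | boxMinus (ρ : NNIntvl) {M : MA α} : HeadOK M → HeadOK (MA.boxMinus ρ M)
  | boxPlus (ρ : NNIntvl) {M : MA α} : HeadOK M → HeadOK (MA.boxPlus ρ M)

/-- Variables of a relational atom. -/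
def Atom.vars (A : Atom) : Set ℕ := {v | Term.var v ∈ A.args}

/-- Variables of a metric atom. -/
def MA.vars : MA Atom → Set ℕ
  | .top => ∅
  | .bot => ∅
  | .atom A => A.vars
  | .diaMinus _ M => M.vars
  | .diaPlus _ M => M.vars
  | .boxMinus _ M => M.vars
  | .boxPlus _ M => M.vars
  | .since _ M₁ M₂ => M₁.vars ∪ M₂.vars
  | .untl _ M₁ M₂ => M₁.vars ∪ M₂.vars

/-- Variables of a metric atom occurring outside left operands of `S` and `U`. -/
def MA.safeVars : MA Atom → Set ℕ
  | .top => ∅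
  | .bot => ∅
  | .atom A => A.vars
  | .diaMinus _ M => M.safeVars
  | .diaPlus _ M => M.safeVars
  | .boxMinus _ M => M.safeVars
  | .boxPlus _ M => M.safeVars
  | .since _ _ M₂ => M₂.safeVars
  | .untl _ _ M₂ => M₂.safeVars

/-- A (safe) rule `M' ← M₁ ∧ … ∧ Mₙ`, `n ≥ 1`, with head from the head grammar. -/
structure Rule where
  head : MA Atom
  body : List (MA Atom)
  body_ne : body ≠ []
  head_ok : HeadOK head
  safe : head.vars ⊆ ⋃ M ∈ body, MA.safeVars M

/-- A program: a finite set of (safe) rules. -/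
structure Program where
  rules : Set Rule
  finite : rules.Finite

/-- An interpretation satisfies a rule if it satisfies all its ground instances. -/
def modelsRule (I : Interp) (r : Rule) : Prop :=
  ∀ (σ : ℕ → ℕ) (t : ℚ), (∀ M ∈ r.body, sat I t (M.subst σ)) → sat I t (r.head.subst σ)

def modelsProgram (I : Interp) (P : Program) : Prop := ∀ r ∈ P.rules, modelsRule I r

def modelsDataset (I : Interp) (D : Dataset) : Prop := ∀ f ∈ D.facts, satFact I f

/-- `gEntails M s A u` : every interpretation satisfying the ground metric atom `M`
throughout `s` satisfies the ground relational atom `A` throughout `u`. -/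
def gEntails (M : MA GAtom) (s : Set ℚ) (A : GAtom) (u : Set ℚ) : Prop :=
  ∀ J : Interp, satSet J M s → ∀ t ∈ u, J A t

/-- The immediate consequence operator `T_Π`: the least interpretation containing `I`
and satisfying, for each ground rule instance whose body is satisfied by `I` at `t`,
the head of the instance at `t`. -/
def TP (P : Program) (I : Interp) : Interp := fun A t' =>
  I A t' ∨ ∃ r ∈ P.rules, ∃ (σ : ℕ → ℕ) (t : ℚ),
    (∀ M ∈ r.body, sat I t (M.subst σ)) ∧ gEntails (r.head.subst σ) {t} A {t'}

/-- Finite powers of the immediate consequence operator. -/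
def TPiter (P : Program) : ℕ → Interp → Interp
  | 0, I => I
  | k + 1, I => TP P (TPiter P k I)

/-- The canonical interpretation `can(Π,D) = T_Π^{ω₁}(𝔍_D)`, characterised as the least
prefixed point of the (monotone, inflationary) operator `T_Π` containing the given
interpretation (the transfinite iteration stabilises at `ω₁` on this least fixpoint). -/
def canon (P : Program) (I : Interp) : Interp := fun A t =>
  ∀ J : Interp, leI I J → leI (TP P J) J → J A t

/-- Projection of an interpretation to a set of time points. -/
def proj (I : Interp) (s : Set ℚ) : Interp := fun A t => t ∈ s ∧ I A t

/-- Metric atoms mentioning only relational atoms and past operators `◆⁻, ■⁻, S`. -/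
def MA.PastOnly {α : Type} : MA α → Prop
  | .atom _ => True
  | .diaMinus _ M => M.PastOnly
  | .boxMinus _ M => M.PastOnly
  | .since _ M₁ M₂ => M₁.PastOnly ∧ M₂.PastOnly
  | _ => False

/-- Metric atoms mentioning only relational atoms and future operators `◆⁺, ■⁺, U`. -/
def MA.FutureOnly {α : Type} : MA α → Prop
  | .atom _ => True
  | .diaPlus _ M => M.FutureOnly
  | .boxPlus _ M => M.FutureOnly
  | .untl _ M₁ M₂ => M₁.FutureOnly ∧ M₂.FutureOnly
  | _ => False

def Rule.ForwardProp (r : Rule) : Prop :=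
  (∀ M ∈ r.body, MA.PastOnly M) ∧ MA.FutureOnly r.head

def Rule.BackwardProp (r : Rule) : Prop :=
  (∀ M ∈ r.body, MA.FutureOnly M) ∧ MA.PastOnly r.head

def Program.ForwardProp (P : Program) : Prop := ∀ r ∈ P.rules, r.ForwardProp

def Program.BackwardProp (P : Program) : Prop := ∀ r ∈ P.rules, r.BackwardProp

/-- Predicates mentioned in a metric atom. -/
def MA.apreds : MA Atom → Set ℕ
  | .top => ∅
  | .bot => ∅
  | .atom A => {A.pred}
  | .diaMinus _ M => M.apreds
  | .diaPlus _ M => M.apreds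
  | .boxMinus _ M => M.apreds
  | .boxPlus _ M => M.apreds
  | .since _ M₁ M₂ => M₁.apreds ∪ M₂.apreds
  | .untl _ M₁ M₂ => M₁.apreds ∪ M₂.apreds

def Rule.headPreds (r : Rule) : Set ℕ := r.head.apreds

def Rule.bodyPreds (r : Rule) : Set ℕ := ⋃ M ∈ r.body, MA.apreds M

/-- Edge of the dependency graph: some rule mentions `Q` in its body and `R` in its head. -/
def DepEdge (P : Program) (Q R : ℕ) : Prop :=
  ∃ r ∈ P.rules, Q ∈ r.bodyPreds ∧ R ∈ r.headPreds

/-- A predicate is recursive if the dependency graph has a path containing a cycle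
and ending in it. -/
def Recursive (P : Program) (Q : ℕ) : Prop :=
  ∃ R : ℕ, Relation.TransGen (DepEdge P) R R ∧ Relation.ReflTransGen (DepEdge P) R Q

def Program.restrict (P : Program) (p : Rule → Prop) : Program :=
  ⟨{r | r ∈ P.rules ∧ p r}, P.finite.subset (fun _ hr => hr.1)⟩

/-- The non-recursive fragment: rules whose heads mention only non-recursive predicates. -/
def Program.nrFrag (P : Program) : Program :=
  P.restrict (fun r => ∀ Q ∈ r.headPreds, ¬ Recursive P Q)

/-- The recursive fragment: the remaining rules. -/
def Program.recFrag (P : Program) : Program :=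
  P.restrict (fun r => ¬ ∀ Q ∈ r.headPreds, ¬ Recursive P Q)

/-- Removing a single rule from a program. -/
def Program.erase (P : Program) (r : Rule) : Program := P.restrict (fun r' => r' ≠ r)

/-- `ρ` is a subset-maximal interval on which `I` satisfies `M`. -/
def MaximalSat (I : Interp) (M : MA GAtom) (ρ : Intvl) : Prop :=
  satIvl I M ρ ∧ ∀ ρ' : Intvl, ρ.carrier ⊆ ρ'.carrier → satIvl I M ρ' → ρ'.carrier = ρ.carrier

/-- The single relational atom occurring in a head-shaped metric atom (if any). -/
def MA.headAtom {α : Type} : MA α → Option α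
  | .atom A => some A
  | .boxMinus _ M => M.headAtom
  | .boxPlus _ M => M.headAtom
  | _ => none

/-- The set `r[F]` of facts derived by rule `r` from the facts `F` (Definition 1). -/
def Rule.derive (r : Rule) (F : Set Fact) : Set Fact :=
  { f | ∃ (σ : ℕ → ℕ) (ρs : Fin r.body.length → Intvl),
      (∀ i : Fin r.body.length, MaximalSat (interpOf F) ((r.body.get i).subst σ) (ρs i)) ∧
      (r.head.subst σ).headAtom = some f.atom ∧
      gEntails (r.head.subst σ) (⋂ i, (ρs i).carrier) f.atom f.ivl.carrier ∧
      ∀ ρ' : Intvl, f.ivl.carrier ⊆ ρ'.carrier →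
        gEntails (r.head.subst σ) (⋂ i, (ρs i).carrier) f.atom ρ'.carrier →
        ρ'.carrier = f.ivl.carrier }

/-- The set `Π[F]` of facts derived from `F` by one-step application of `Π`. -/
def Program.derive (P : Program) (F : Set Fact) : Set Fact := ⋃ r ∈ P.rules, Rule.derive r F

/-- The coalescing `F₁ ⋓ F₂`: all facts `M@ρ` such that the least model of `F₁ ∪ F₂`
satisfies `M@ρ` but no `M@ρ'` for an interval `ρ'` strictly containing `ρ`. -/
def coalesce (F₁ F₂ : Set Fact) : Set Fact :=
  { f | satIvl (interpOf (F₁ ∪ F₂)) (MA.atom f.atom) f.ivl ∧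
        ∀ ρ' : Intvl, f.ivl.carrier ⊂ ρ'.carrier →
          ¬ satIvl (interpOf (F₁ ∪ F₂)) (MA.atom f.atom) ρ' }

lemma sat_mono {I J : Interp} (h : leI I J) : ∀ (M : MA GAtom) (s : ℚ), sat I s M → sat J s M := by
  intro M
  induction M with
  | top => intro s hs; trivial
  | bot => intro s hs; exact hs
  | atom A => intro s hs; exact h A s hs
  | diaMinus ρ M ih => rintro s ⟨t', ht', hM⟩; exact ⟨t', ht', ih _ hM⟩
  | diaPlus ρ M ih => rintro s ⟨t', ht', hM⟩; exact ⟨t', ht', ih _ hM⟩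
  | boxMinus ρ M ih => intro s hs t' ht'; exact ih _ (hs t' ht')
  | boxPlus ρ M ih => intro s hs t' ht'; exact ih _ (hs t' ht')
  | since ρ M₁ M₂ ih₁ ih₂ =>
      rintro s ⟨t', ht', h₂, h₁⟩
      exact ⟨t', ht', ih₂ _ h₂, fun t'' ha hb => ih₁ _ (h₁ t'' ha hb)⟩
  | untl ρ M₁ M₂ ih₁ ih₂ =>
      rintro s ⟨t', ht', h₂, h₁⟩
      exact ⟨t', ht', ih₂ _ h₂, fun t'' ha hb => ih₁ _ (h₁ t'' ha hb)⟩

lemma pastOnly_map {α β : Type} (g : α → β) :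
    ∀ M : MA α, M.PastOnly → (M.map g).PastOnly := by
  intro M
  induction M with
  | since ρ M₁ M₂ ih₁ ih₂ =>
      intro h; exact ⟨ih₁ h.1, ih₂ h.2⟩
  | diaMinus ρ M ih => exact ih
  | boxMinus ρ M ih => exact ih
  | atom A => intro _; trivial
  | top => intro h; exact h
  | bot => intro h; exact h
  | diaPlus ρ M ih => intro h; exact h
  | boxPlus ρ M ih => intro h; exact h
  | untl ρ M₁ M₂ ih₁ ih₂ => intro h; exact h

lemma futureOnly_map {α β : Type} (g : α → β) :
    ∀ M : MA α, M.FutureOnly → (M.map g).FutureOnly := by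
  intro M
  induction M with
  | untl ρ M₁ M₂ ih₁ ih₂ =>
      intro h; exact ⟨ih₁ h.1, ih₂ h.2⟩
  | diaPlus ρ M ih => exact ih
  | boxPlus ρ M ih => exact ih
  | atom A => intro _; trivial
  | top => intro h; exact h
  | bot => intro h; exact h
  | diaMinus ρ M ih => intro h; exact h
  | boxMinus ρ M ih => intro h; exact h
  | since ρ M₁ M₂ ih₁ ih₂ => intro h; exact h

/-- Past-only atoms satisfied at `s ≤ t` remain satisfied after projecting to `(-∞,t]`. -/
lemma sat_past_proj {I : Interp} (t : ℚ) :
    ∀ (M : MA GAtom), M.PastOnly → ∀ s ≤ t, sat I s M → sat (proj I (Set.Iic t)) s M := by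
  intro M
  induction M with
  | top => intro _ s _ _; trivial
  | bot => intro h; exact absurd h (by simp [MA.PastOnly])
  | atom A => intro _ s hs hA; exact ⟨hs, hA⟩
  | diaMinus ρ M ih =>
      rintro hp s hs ⟨t', ht', hM⟩
      have ht'le : t' ≤ s := by
        have := ρ.2 _ ht'; linarith
      exact ⟨t', ht', ih hp t' (ht'le.trans hs) hM⟩
  | diaPlus ρ M ih => intro h; exact absurd h (by simp [MA.PastOnly])
  | boxMinus ρ M ih =>
      intro hp s hs hM t' ht'
      have ht'le : t' ≤ s := by
        have := ρ.2 _ ht'; linarith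
      exact ih hp t' (ht'le.trans hs) (hM t' ht')
  | boxPlus ρ M ih => intro h; exact absurd h (by simp [MA.PastOnly])
  | since ρ M₁ M₂ ih₁ ih₂ =>
      rintro ⟨hp₁, hp₂⟩ s hs ⟨t', ht', h₂, h₁⟩
      have ht'le : t' ≤ s := by
        have := ρ.2 _ ht'; linarith
      refine ⟨t', ht', ih₂ hp₂ t' (ht'le.trans hs) h₂, fun t'' ha hb =>
        ih₁ hp₁ t'' (le_of_lt (lt_of_lt_of_le hb hs)) (h₁ t'' ha hb)⟩
  | untl ρ M₁ M₂ ih₁ ih₂ => intro h; exact absurd h (by simp [MA.PastOnly])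

/-- The interpretation where everything holds from `t₀` on satisfies any
future-only atom at any time `≥ t₀`. -/
lemma future_sat (t₀ : ℚ) :
    ∀ (M : MA GAtom), M.FutureOnly → ∀ s, t₀ ≤ s → sat (fun _ u => t₀ ≤ u) s M := by
  intro M
  induction M with
  | top => intro _ s _; trivial
  | bot => intro h; exact absurd h (by simp [MA.FutureOnly])
  | atom A => intro _ s hs; exact hs
  | diaPlus ρ M ih =>
      intro hp s hs
      obtain ⟨x, hx⟩ := ρ.1.nonempty
      have hx0 : (0:ℚ) ≤ x := ρ.2 _ hx
      exact ⟨s + x, by simpa using hx, ih hp (s + x) (by linarith)⟩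
  | diaMinus ρ M ih => intro h; exact absurd h (by simp [MA.FutureOnly])
  | boxPlus ρ M ih =>
      intro hp s hs t' ht'
      have : 0 ≤ t' - s := ρ.2 _ ht'
      exact ih hp t' (by linarith)
  | boxMinus ρ M ih => intro h; exact absurd h (by simp [MA.FutureOnly])
  | untl ρ M₁ M₂ ih₁ ih₂ =>
      rintro ⟨hp₁, hp₂⟩ s hs
      obtain ⟨x, hx⟩ := ρ.1.nonempty
      have hx0 : (0:ℚ) ≤ x := ρ.2 _ hx
      refine ⟨s + x, by simpa using hx, ih₂ hp₂ (s + x) (by linarith),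
        fun t'' ha _ => ih₁ hp₁ t'' (by linarith)⟩
  | since ρ M₁ M₂ ih₁ ih₂ => intro h; exact absurd h (by simp [MA.FutureOnly])

/-- If a future-only head satisfied at `t₀` entails an atom at `t'`, then `t₀ ≤ t'`. -/
lemma gEntails_future_le {M : MA GAtom} (hf : M.FutureOnly) {t₀ t' : ℚ} {A : GAtom}
    (h : gEntails M {t₀} A {t'}) : t₀ ≤ t' := by
  have := h (fun _ u => t₀ ≤ u) (fun u hu => by
    have : u = t₀ := hu
    subst this
    exact future_sat u M hf u le_rfl) t' rfl
  exact this

/-- for a forward-propagating program, the immediate consequence operator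
commutes with projection to the past: `T_Π(𝔍)|_{(-∞,t]} = T_Π(𝔍|_{(-∞,t]})|_{(-∞,t]}`. -/
theorem tp_commutes_with_past_projection (P : Program) (hfp : P.ForwardProp)
    (I : Interp) (t : ℚ) :
    proj (TP P I) (Set.Iic t) = proj (TP P (proj I (Set.Iic t))) (Set.Iic t) := by
  funext A t'
  apply propext
  constructor
  · rintro ⟨ht', hTP⟩
    refine ⟨ht', ?_⟩
    rcases hTP with hI | ⟨r, hr, σ, t₀, hbody, hent⟩
    · exact Or.inl ⟨ht', hI⟩
    · refine Or.inr ⟨r, hr, σ, t₀, ?_, hent⟩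
      -- the head is future-only, so t₀ ≤ t' ≤ t
      have hfo : (r.head.subst σ).FutureOnly :=
        futureOnly_map _ _ (hfp r hr).2
      have ht₀ : t₀ ≤ t' := gEntails_future_le hfo hent
      intro M hM
      have hpo : (M.subst σ).PastOnly := pastOnly_map _ _ ((hfp r hr).1 M hM)
      exact sat_past_proj t _ hpo t₀ (ht₀.trans ht') (hbody M hM)
  · rintro ⟨ht', hTP⟩
    refine ⟨ht', ?_⟩
    have hle : leI (proj I (Set.Iic t)) I := fun A s hs => hs.2
    rcases hTP with hI | ⟨r, hr, σ, t₀, hbody, hent⟩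
    · exact Or.inl hI.2
    · exact Or.inr ⟨r, hr, σ, t₀,
        fun M hM => sat_mono hle _ _ (hbody M hM), hent⟩

end DatalogMTL
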